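/- The stopping time 𝒯_d equals the following two-stage time: first wait until the diameter of Brownian Motion first reaches 2d (time δ_{2d}); at that moment B is at its running maximum or running minimum; then continue until B displays a drawdown of size d (if at the maximum) or a rise of size d (if at the minimum) measured from time δ_{2d} onward. -/

import Mathlib

open MeasureTheory ProbabilityTheory Set

/-- Standard one-dimensional Brownian Motion started at `0`:
measurable, continuous paths, independent Gaussian increments. -/
structure IsStdBM {Ω : Type*} [MeasurableSpace Ω] (P : Measure Ω) (B : ℝ → Ω → ℝ) : Prop where
  isProb : IsProbabilityMeasure P
  meas : ∀ t, Measurable (B t)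
  init : ∀ ω, B 0 ω = 0
  cont : ∀ ω, Continuous fun t => B t ω
  incr : ∀ s t : ℝ, 0 ≤ s → s ≤ t →
    Measure.map (fun ω => B t ω - B s ω) P = gaussianReal 0 (Real.toNNReal (t - s))
  indep : ∀ (n : ℕ) (t : Fin (n + 1) → ℝ), Monotone t → (∀ i, 0 ≤ t i) →
    iIndepFun
      (fun i : Fin n => fun ω => B (t i.succ) ω - B (t i.castSucc) ω) P

/-- Running maximum `M(t) = sup_{0 ≤ s ≤ t} B(s)`. -/
noncomputable def runMax {Ω : Type*} (B : ℝ → Ω → ℝ) (t : ℝ) (ω : Ω) : ℝ :=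
  sSup ((fun s => B s ω) '' Set.Icc 0 t)

/-- Running minimum `m(t) = inf_{0 ≤ s ≤ t} B(s)`. -/
noncomputable def runMin {Ω : Type*} (B : ℝ → Ω → ℝ) (t : ℝ) (ω : Ω) : ℝ :=
  sInf ((fun s => B s ω) '' Set.Icc 0 t)

/-!
Pathwise, with `M`, `m` the running extrema of a continuous path `f`: before the range `M - m`
first reaches `2d` at time `δ`, no time satisfies `min (M - f, f - m) ≥ d`. At `δ` the path sits at
a new maximum or a new minimum, since otherwise both extremes over `[0, δ]` would already be
attained strictly before `δ`. Say it is a maximum, so `m δ ≤ f δ - 2d`. From then on `M` is the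
maximum since `δ`, and at the first time the drawdown from `δ` reaches `d` the path is still at
least `f δ - d`, that is `d` above `m`; so this time is `𝒯_d`. The minimum case is the maximum
case for `-f`. Almost surely the range of Brownian motion does reach `2d`, because
`P(|B t| < 2d) = O(t^{-1/2})`.
-/

open Filter Topology
open scoped NNReal ENNReal Real

section RunningExtrema

variable {f : ℝ → ℝ} {a b c : ℝ}

lemma sSup_image_Icc_eq_max (hf : Continuous f) (hab : a ≤ b) (hbc : b ≤ c) :
    sSup (f '' Icc a c) = max (sSup (f '' Icc a b)) (sSup (f '' Icc b c)) := by
  rw [← Icc_union_Icc_eq_Icc hab hbc, image_union,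
    csSup_union (isCompact_Icc.image hf).bddAbove ((nonempty_Icc.2 hab).image f)
      (isCompact_Icc.image hf).bddAbove ((nonempty_Icc.2 hbc).image f)]

lemma sInf_image_Icc_eq_min (hf : Continuous f) (hab : a ≤ b) (hbc : b ≤ c) :
    sInf (f '' Icc a c) = min (sInf (f '' Icc a b)) (sInf (f '' Icc b c)) := by
  rw [← Icc_union_Icc_eq_Icc hab hbc, image_union,
    csInf_union (isCompact_Icc.image hf).bddBelow ((nonempty_Icc.2 hab).image f)
      (isCompact_Icc.image hf).bddBelow ((nonempty_Icc.2 hbc).image f)]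

lemma sSup_image_neg (f : ℝ → ℝ) (s : Set ℝ) : sSup ((fun x => -f x) '' s) = -sInf (f '' s) := by
  rw [← Real.sSup_neg, ← image_neg_eq_neg, image_image]

lemma sInf_image_neg (f : ℝ → ℝ) (s : Set ℝ) : sInf ((fun x => -f x) '' s) = -sSup (f '' s) := by
  rw [← Real.sInf_neg, ← image_neg_eq_neg, image_image]

lemma abs_sub_le_sSup_sub_sInf (hf : ContinuousOn f (Icc a b)) {s t : ℝ} (hs : s ∈ Icc a b)
    (ht : t ∈ Icc a b) : |f s - f t| ≤ sSup (f '' Icc a b) - sInf (f '' Icc a b) :=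
  abs_sub_le_iff.2 ⟨by linarith [hf.le_sSup_image_Icc hs, hf.sInf_image_Icc_le ht],
    by linarith [hf.le_sSup_image_Icc ht, hf.sInf_image_Icc_le hs]⟩

lemma image_Icc_eq_image_lineMap (f : ℝ → ℝ) (hab : a ≤ b) :
    f '' Icc a b = (fun u => f (AffineMap.lineMap (k := ℝ) a b u)) '' Icc (0 : ℝ) 1 := by
  rw [← segment_eq_Icc (𝕜 := ℝ) hab, segment_eq_image_lineMap, image_image]

lemma continuousOn_sSup_image_Icc (hf : Continuous f) (a : ℝ) :
    ContinuousOn (fun t => sSup (f '' Icc a t)) (Ici a) := by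
  have h : Continuous fun t =>
      sSup ((fun u => f (AffineMap.lineMap (k := ℝ) a t u)) '' Icc (0 : ℝ) 1) :=
    isCompact_Icc.continuous_sSup (by simp only [AffineMap.lineMap_apply_module]; fun_prop)
  exact h.continuousOn.congr fun t ht => by rw [image_Icc_eq_image_lineMap f ht]

lemma continuousOn_sInf_image_Icc (hf : Continuous f) (a : ℝ) :
    ContinuousOn (fun t => sInf (f '' Icc a t)) (Ici a) := by
  simpa only [sSup_image_neg, Pi.neg_def, neg_neg] using
    (continuousOn_sSup_image_Icc (f := fun x => -f x) hf.neg a).neg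

end RunningExtrema

section FirstHit

variable {g : ℝ → ℝ} {a y : ℝ}

noncomputable def firstHit (g : ℝ → ℝ) (a y : ℝ) : ℝ := sInf {t | a ≤ t ∧ y ≤ g t}

lemma le_firstHit (h : ∃ t, a ≤ t ∧ y ≤ g t) : a ≤ firstHit g a y :=
  le_csInf h fun _ ht => ht.1

lemma firstHit_le {t : ℝ} (ht : a ≤ t) (hy : y ≤ g t) : firstHit g a y ≤ t :=
  csInf_le ⟨a, fun _ hs => hs.1⟩ ⟨ht, hy⟩

lemma ContinuousOn.le_apply_firstHit (hg : ContinuousOn g (Ici a)) (h : ∃ t, a ≤ t ∧ y ≤ g t) :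
    y ≤ g (firstHit g a y) :=
  (IsClosed.csInf_mem (hg.preimage_isClosed_of_isClosed isClosed_Ici isClosed_Ici) h
    ⟨a, fun _ hs => hs.1⟩).2

lemma ContinuousOn.apply_firstHit (hg : ContinuousOn g (Ici a)) (ha : g a ≤ y)
    (h : ∃ t, a ≤ t ∧ y ≤ g t) : g (firstHit g a y) = y := by
  have haτ := le_firstHit h
  obtain ⟨s, hs, hgs⟩ := intermediate_value_Icc haτ (hg.mono Icc_subset_Ici_self)
    ⟨ha, hg.le_apply_firstHit h⟩
  have hsτ : s = firstHit g a y := le_antisymm hs.2 (firstHit_le hs.1 hgs.ge)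
  rwa [← hsτ]

end FirstHit

section Pathwise

variable {f : ℝ → ℝ} {d r δ : ℝ}

noncomputable def firstRangeTime (f : ℝ → ℝ) (r : ℝ) : ℝ :=
  firstHit (fun t => sSup (f '' Icc 0 t) - sInf (f '' Icc 0 t)) 0 r

lemma le_sSup_sub_sInf_firstRangeTime (hf : Continuous f)
    (hne : ∃ t, 0 ≤ t ∧ r ≤ sSup (f '' Icc 0 t) - sInf (f '' Icc 0 t))
    (hδ : δ = firstRangeTime f r) : r ≤ sSup (f '' Icc 0 δ) - sInf (f '' Icc 0 δ) :=
  hδ ▸ ((continuousOn_sSup_image_Icc hf 0).sub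
    (continuousOn_sInf_image_Icc hf 0)).le_apply_firstHit hne

lemma apply_firstRangeTime_eq_sSup_or_sInf (hf : Continuous f)
    (hne : ∃ t, 0 ≤ t ∧ r ≤ sSup (f '' Icc 0 t) - sInf (f '' Icc 0 t))
    (hδ : δ = firstRangeTime f r) : f δ = sSup (f '' Icc 0 δ) ∨ f δ = sInf (f '' Icc 0 δ) := by
  have hδ0 : 0 ≤ δ := hδ ▸ le_firstHit hne
  have hr := le_sSup_sub_sInf_firstRangeTime hf hne hδ
  obtain ⟨s₁, hs₁, hfs₁⟩ := (isCompact_Icc.image hf).sSup_mem ((nonempty_Icc.2 hδ0).image f)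
  obtain ⟨s₂, hs₂, hfs₂⟩ := (isCompact_Icc.image hf).sInf_mem ((nonempty_Icc.2 hδ0).image f)
  by_contra! hne'
  have h₁ : s₁ < δ := hs₁.2.lt_of_ne (by rintro rfl; exact hne'.1 hfs₁)
  have h₂ : s₂ < δ := hs₂.2.lt_of_ne (by rintro rfl; exact hne'.2 hfs₂)
  have hlate : δ ≤ max s₁ s₂ := hδ ▸ firstHit_le (le_max_of_le_left hs₁.1) (by
    linarith [hf.continuousOn.le_sSup_image_Icc (⟨hs₁.1, le_max_left s₁ s₂⟩ : s₁ ∈ Icc 0 _),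
      hf.continuousOn.sInf_image_Icc_le (⟨hs₂.1, le_max_right s₁ s₂⟩ : s₂ ∈ Icc 0 _)])
  exact (max_lt h₁ h₂).not_ge hlate

lemma firstHit_min_eq_of_apply_eq_sSup (hf : Continuous f) (hd : 0 ≤ d)
    (hne : ∃ t, 0 ≤ t ∧ 2 * d ≤ sSup (f '' Icc 0 t) - sInf (f '' Icc 0 t))
    (hδ : δ = firstRangeTime f (2 * d)) (hmax : f δ = sSup (f '' Icc 0 δ)) :
    firstHit (fun t => min (sSup (f '' Icc 0 t) - f t) (f t - sInf (f '' Icc 0 t))) 0 d =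
      firstHit (fun t => sSup (f '' Icc δ t) - f t) δ d := by
  have hδ0 : 0 ≤ δ := hδ ▸ le_firstHit hne
  have hrange := le_sSup_sub_sInf_firstRangeTime hf hne hδ
  have hsup (t : ℝ) (ht : δ ≤ t) : sSup (f '' Icc 0 t) = sSup (f '' Icc δ t) := by
    rw [sSup_image_Icc_eq_max hf hδ0 ht, ← hmax,
      max_eq_right (hf.continuousOn.le_sSup_image_Icc ⟨le_rfl, ht⟩)]
  have hsub : {t | 0 ≤ t ∧ d ≤ min (sSup (f '' Icc 0 t) - f t) (f t - sInf (f '' Icc 0 t))} ⊆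
      {t | δ ≤ t ∧ d ≤ sSup (f '' Icc δ t) - f t} := by
    rintro t ⟨ht0, htd⟩
    rw [le_min_iff] at htd
    have hδt : δ ≤ t := hδ ▸ firstHit_le ht0 (by linarith [htd.1, htd.2])
    exact ⟨hδt, hsup t hδt ▸ htd.1⟩
  rcases eq_empty_or_nonempty {t | δ ≤ t ∧ d ≤ sSup (f '' Icc δ t) - f t} with hempty | hne'
  · rw [firstHit, firstHit, hempty, subset_empty_iff.1 (hsub.trans hempty.subset)]
  set c := firstHit (fun t => sSup (f '' Icc δ t) - f t) δ d
  have hδc : δ ≤ c := le_firstHit hne'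
  have hc : sSup (f '' Icc δ c) - f c = d :=
    ((continuousOn_sSup_image_Icc hf δ).sub hf.continuousOn).apply_firstHit
      (by simpa using hd) hne'
  have hmin : sInf (f '' Icc 0 c) ≤ sInf (f '' Icc 0 δ) := by
    rw [sInf_image_Icc_eq_min hf hδ0 hδc]; exact min_le_left _ _
  have hcT : 0 ≤ c ∧ d ≤ min (sSup (f '' Icc 0 c) - f c) (f c - sInf (f '' Icc 0 c)) :=
    ⟨hδ0.trans hδc, le_min (by rw [hsup c hδc, hc])
      (by linarith [hf.continuousOn.le_sSup_image_Icc (⟨le_rfl, hδc⟩ : δ ∈ Icc δ c)])⟩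
  exact le_antisymm (firstHit_le hcT.1 hcT.2) (csInf_le_csInf ⟨δ, fun t ht => ht.1⟩ ⟨c, hcT⟩ hsub)

lemma firstRangeTime_neg (f : ℝ → ℝ) (r : ℝ) :
    firstRangeTime (fun x => -f x) r = firstRangeTime f r := by
  simp only [firstRangeTime, sSup_image_neg, sInf_image_neg, neg_sub_neg]

lemma firstHit_min_eq_of_apply_eq_sInf (hf : Continuous f) (hd : 0 ≤ d)
    (hne : ∃ t, 0 ≤ t ∧ 2 * d ≤ sSup (f '' Icc 0 t) - sInf (f '' Icc 0 t))
    (hδ : δ = firstRangeTime f (2 * d)) (hmin : f δ = sInf (f '' Icc 0 δ)) :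
    firstHit (fun t => min (sSup (f '' Icc 0 t) - f t) (f t - sInf (f '' Icc 0 t))) 0 d =
      firstHit (fun t => f t - sInf (f '' Icc δ t)) δ d := by
  have h := firstHit_min_eq_of_apply_eq_sSup (f := fun x => -f x) hf.neg hd
    (by simpa only [sSup_image_neg, sInf_image_neg, neg_sub_neg] using hne)
    (hδ.trans (firstRangeTime_neg f _).symm) (by rw [sSup_image_neg, hmin])
  simp only [sSup_image_neg, sInf_image_neg, sub_neg_eq_add] at h
  convert h using 3 with t
  · rw [min_comm]; congr 1 <;> ring
  · ring

theorem firstHit_min_eq_two_stage (hf : Continuous f) (hd : 0 < d)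
    (hne : ∃ t, 0 ≤ t ∧ 2 * d ≤ sSup (f '' Icc 0 t) - sInf (f '' Icc 0 t)) {τ δ : ℝ}
    (hτ : τ = firstHit (fun t => min (sSup (f '' Icc 0 t) - f t) (f t - sInf (f '' Icc 0 t))) 0 d)
    (hδ : δ = firstRangeTime f (2 * d)) :
    (f δ = sSup (f '' Icc 0 δ) ∨ f δ = sInf (f '' Icc 0 δ)) ∧
      τ = sInf {t | δ ≤ t ∧
        ((f δ = sSup (f '' Icc 0 δ) ∧ sSup (f '' Icc δ t) - f t ≥ d) ∨
          (f δ = sInf (f '' Icc 0 δ) ∧ f t - sInf (f '' Icc δ t) ≥ d))} := by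
  have hrange := le_sSup_sub_sInf_firstRangeTime hf hne hδ
  have hext := apply_firstRangeTime_eq_sSup_or_sInf hf hne hδ
  refine ⟨hext, hτ.trans ?_⟩
  rcases hext with hmax | hmin
  · have hnmin : f δ ≠ sInf (f '' Icc 0 δ) := by linarith
    rw [firstHit_min_eq_of_apply_eq_sSup hf hd.le hne hδ hmax, firstHit]
    simp only [eq_true hmax, eq_false hnmin, true_and, false_and, or_false, ge_iff_le]
  · have hnmax : f δ ≠ sSup (f '' Icc 0 δ) := by linarith
    rw [firstHit_min_eq_of_apply_eq_sInf hf hd.le hne hδ hmin, firstHit]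
    simp only [eq_true hmin, eq_false hnmax, true_and, false_and, false_or, ge_iff_le]

end Pathwise

lemma ProbabilityTheory.gaussianPDFReal_le (μ : ℝ) (v : ℝ≥0) (x : ℝ) :
    gaussianPDFReal μ v x ≤ (√(2 * π * v))⁻¹ := by
  rw [gaussianPDFReal]
  refine mul_le_of_le_one_right (by positivity) (Real.exp_le_one_iff.2 ?_)
  exact div_nonpos_of_nonpos_of_nonneg (neg_nonpos.2 (sq_nonneg _)) (by positivity)

lemma ProbabilityTheory.gaussianReal_le_mul_volume (μ : ℝ) {v : ℝ≥0} (hv : v ≠ 0) (s : Set ℝ) :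
    gaussianReal μ v s ≤ ENNReal.ofReal (√(2 * π * v))⁻¹ * volume s := by
  rw [gaussianReal_apply μ hv, ← setLIntegral_const]
  exact lintegral_mono fun x => ENNReal.ofReal_le_ofReal (gaussianPDFReal_le μ v x)

lemma IsStdBM.ae_exists_le_abs {Ω : Type*} [MeasurableSpace Ω] {P : Measure Ω} {B : ℝ → Ω → ℝ}
    (hB : IsStdBM P B) (r : ℝ) : ∀ᵐ ω ∂P, ∃ t, 0 ≤ t ∧ r ≤ |B t ω| := by
  have hlaw (t : ℝ) (ht : 0 ≤ t) : P.map (B t) = gaussianReal 0 t.toNNReal := by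
    simpa [hB.init] using hB.incr 0 t le_rfl ht
  rw [ae_iff]
  set E := {ω | ¬∃ t, 0 ≤ t ∧ r ≤ |B t ω|}
  have hbound (t : ℝ) (ht : 0 < t) :
      P E ≤ ENNReal.ofReal (√(2 * π * t))⁻¹ * volume (Ioo (-r) r) :=
    calc P E ≤ P (B t ⁻¹' Ioo (-r) r) :=
          measure_mono fun ω hω => abs_lt.1 (not_le.1 fun h => hω ⟨t, ht.le, h⟩)
      _ = gaussianReal 0 t.toNNReal (Ioo (-r) r) := by
          rw [← hlaw t ht.le, Measure.map_apply (hB.meas t) measurableSet_Ioo]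
      _ ≤ _ := by
          simpa [ht.le] using
            gaussianReal_le_mul_volume 0 (Real.toNNReal_pos.2 ht).ne' (Ioo (-r) r)
  have hlim : Tendsto (fun t => ENNReal.ofReal (√(2 * π * t))⁻¹ * volume (Ioo (-r) r))
      atTop (𝓝 0) := by
    have h : Tendsto (fun t : ℝ => (√(2 * π * t))⁻¹) atTop (𝓝 0) :=
      tendsto_inv_atTop_zero.comp
        (Real.tendsto_sqrt_atTop.comp (tendsto_id.const_mul_atTop (by positivity)))
    simpa using ENNReal.Tendsto.mul_const (ENNReal.tendsto_ofReal h)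
      (Or.inr (measure_Ioo_lt_top : volume (Ioo (-r) r) < ∞).ne)
  exact nonpos_iff_eq_zero.1 (ge_of_tendsto hlim ((eventually_gt_atTop 0).mono hbound))

theorem calT_two_stage {Ω : Type*} [MeasurableSpace Ω] (P : Measure Ω)
    (B : ℝ → Ω → ℝ) (hB : IsStdBM P B) (d : ℝ) (hd : 0 < d)
    (T : Ω → ℝ)
    (hT : ∀ ω, T ω = sInf {t : ℝ | 0 ≤ t ∧
      min (runMax B t ω - B t ω) (B t ω - runMin B t ω) ≥ d})
    (δ : Ω → ℝ)
    (hδ : ∀ ω, δ ω = sInf {t : ℝ | 0 ≤ t ∧ runMax B t ω - runMin B t ω ≥ 2 * d}) :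
    ∀ᵐ ω ∂P,
      (B (δ ω) ω = runMax B (δ ω) ω ∨ B (δ ω) ω = runMin B (δ ω) ω) ∧
      T ω = sInf {t : ℝ | δ ω ≤ t ∧
        ((B (δ ω) ω = runMax B (δ ω) ω ∧
          sSup ((fun s => B s ω) '' Set.Icc (δ ω) t) - B t ω ≥ d) ∨
         (B (δ ω) ω = runMin B (δ ω) ω ∧
          B t ω - sInf ((fun s => B s ω) '' Set.Icc (δ ω) t) ≥ d))} := by
  filter_upwards [hB.ae_exists_le_abs (2 * d)] with ω ⟨t, ht, hBt⟩
  have hrange := abs_sub_le_sSup_sub_sInf (hB.cont ω).continuousOn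
    (⟨ht, le_rfl⟩ : t ∈ Icc 0 t) (⟨le_rfl, ht⟩ : 0 ∈ Icc 0 t)
  rw [hB.init, sub_zero] at hrange
  exact firstHit_min_eq_two_stage (hB.cont ω) hd ⟨t, ht, hBt.trans hrange⟩ (hT ω) (hδ ω)
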